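/- Lemma 3.2(i). Let r, m and N be positive integers and let λ, μ be partitions of length ≤ N. If the set K_N^{r,m}(μ, λ) is non-empty, then μ ⊆ λ and λ/μ is an r-decomposable skew partition of size rm. -/

import Mathlib

open MvPolynomial Finset Classical

noncomputable section

/-- A partition: an antitone finitely supported function `ℕ → ℕ`.
`l.part i` is the `(i+1)`-st part `λ_{i+1}` (0-based indexing). -/
def Ptn : Type := {f : ℕ →₀ ℕ // Antitone (f : ℕ → ℕ)}

namespace Ptn

/-- `l.part i = λ_{i+1}` (0-based indexing of the parts). -/
def part (l : Ptn) (i : ℕ) : ℕ := l.1 i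

/-- The size `|λ|`. -/
def size (l : Ptn) : ℕ := l.1.sum fun _ v => v

/-- `Sub m l` means `μ ⊆ λ` (containment of Young diagrams). -/
def Sub (m l : Ptn) : Prop := ∀ i, m.part i ≤ l.part i

/-- The Young diagram (0-based): box `(i,j)` corresponds to row `i+1`, column `j+1`. -/
def cells (l : Ptn) : Set (ℕ × ℕ) := {c | c.2 < l.part c.1}

/-- The Young diagram of the skew partition `λ/μ`. -/
def skew (m l : Ptn) : Set (ℕ × ℕ) := l.cells \ m.cells

/-- The top `t(λ/μ)`: `0` if `λ = μ` and otherwise the least (1-based) `i` with `λ_i ≠ μ_i`. -/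
def top (m l : Ptn) : ℕ := if m = l then 0 else sInf {i | m.part i ≠ l.part i} + 1

/-- The bottom `b(λ/μ)`: `0` if `λ = μ` and otherwise the greatest (1-based) `i` with `λ_i ≠ μ_i`. -/
def bot (m l : Ptn) : ℕ := if m = l then 0 else sSup {i | m.part i ≠ l.part i} + 1

end Ptn

/-- Two boxes are edge-adjacent (horizontally or vertically). -/
def Adjacent (c d : ℕ × ℕ) : Prop :=
  (c.1 = d.1 ∧ (c.2 + 1 = d.2 ∨ d.2 + 1 = c.2)) ∨
  (c.2 = d.2 ∧ (c.1 + 1 = d.1 ∨ d.1 + 1 = c.1))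

/-- A set of boxes is connected via edge-adjacency. -/
def ConnectedSet (S : Set (ℕ × ℕ)) : Prop :=
  ∀ c ∈ S, ∀ d ∈ S, Relation.ReflTransGen (fun x y => y ∈ S ∧ Adjacent x y) c d

/-- `λ/μ` is an `r`-border strip. -/
def IsBorderStrip (r : ℕ) (m l : Ptn) : Prop :=
  Ptn.Sub m l ∧ l.size = m.size + r ∧ ConnectedSet (Ptn.skew m l) ∧
    ∀ c ∈ Ptn.skew m l, (c.1 + 1, c.2 + 1) ∉ Ptn.skew m l

/-- The sign `(-1)^(b(λ/μ) - t(λ/μ))` of a border strip `λ/μ`. -/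
def stripSgn (m l : Ptn) : ℤ := (-1) ^ (Ptn.bot m l - Ptn.top m l)

/-- A chain `μ = γ⁽⁰⁾ ⊆ … ⊆ γ⁽ᵈ⁾ = λ` of `r`-border strips with non-increasing tops. -/
def RChain (r : ℕ) (m l : Ptn) (d : ℕ) (γ : ℕ → Ptn) : Prop :=
  γ 0 = m ∧ γ d = l ∧ (∀ i < d, IsBorderStrip r (γ i) (γ (i + 1))) ∧
    ∀ i, i + 1 < d → Ptn.top (γ (i + 1)) (γ (i + 2)) ≤ Ptn.top (γ i) (γ (i + 1))

/-- `λ/μ` is `r`-decomposable. -/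
def RDecomposable (r : ℕ) (m l : Ptn) : Prop := ∃ d γ, RChain r m l d γ

/-- `sgn_r(λ/μ)`: the product of the signs of the border strips in a decomposition chain,
or `0` if `λ/μ` is not `r`-decomposable. -/
def sgnr (r : ℕ) (m l : Ptn) : ℤ :=
  if h : RDecomposable r m l then
    ∏ i ∈ Finset.range h.choose,
      stripSgn (h.choose_spec.choose i) (h.choose_spec.choose (i + 1))
  else 0

/-- The alternant `a_{λ+δ(N)} = det(x_i^{λ_j + N - j})`. -/
def altPoly (N : ℕ) (l : Ptn) : MvPolynomial (Fin N) ℤ :=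
  Matrix.det (Matrix.of fun i j : Fin N =>
    (X i : MvPolynomial (Fin N) ℤ) ^ (l.part j + (N - 1 - (j : ℕ))))

/-- The compositions of `m` of length `N`. -/
def comps (N m : ℕ) : Finset (Fin N → ℕ) :=
  (Fintype.piFinset fun _ => Finset.range (m + 1)).filter fun β => ∑ i, β i = m

/-- The complete homogeneous symmetric polynomial `h_m` in `N` variables. -/
def hPoly (N m : ℕ) : MvPolynomial (Fin N) ℤ :=
  ∑ β ∈ comps N m, ∏ i, X i ^ β i

/-- The power sum `p_r` in `N` variables. -/
def pPoly (N r : ℕ) : MvPolynomial (Fin N) ℤ :=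
  ∑ i : Fin N, X i ^ r

/-- The plethysm `p_r ∘ h_m = Σ_{β ∈ Com_N(m)} x^{rβ}` in `N` variables. -/
def prhm (N r m : ℕ) : MvPolynomial (Fin N) ℤ :=
  ∑ β ∈ comps N m, ∏ i, X i ^ (r * β i)

/-- A labelled abacus with `N` beads: a sequence `w : ℕ → ℕ` whose nonzero entries are
precisely `1, …, N`, each occurring exactly once. -/
structure Abacus (N : ℕ) where
  w : ℕ → ℕ
  w_le : ∀ i, w i ≤ N
  uniq : ∀ B : ℕ, 1 ≤ B → B ≤ N → ∃! i, w i = B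

namespace Abacus

variable {N : ℕ}

/-- `a.pos B` is the position `w⁻¹(B+1)` of bead `B+1` (beads indexed by `Fin N`, 0-based:
`B : Fin N` stands for the bead labelled `B+1`). -/
def pos (a : Abacus N) (B : Fin N) : ℕ :=
  (a.uniq ((B : ℕ) + 1) (Nat.le_add_left 1 B) B.isLt).choose

lemma pos_spec (a : Abacus N) (B : Fin N) : a.w (a.pos B) = (B : ℕ) + 1 :=
  (a.uniq ((B : ℕ) + 1) (Nat.le_add_left 1 B) B.isLt).choose_spec.1

lemma pos_injective (a : Abacus N) : Function.Injective a.pos := by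
  intro B C h
  have hB := a.pos_spec B
  have hC := a.pos_spec C
  rw [h, hC] at hB
  exact Fin.ext (by omega)

/-- The support of a labelled abacus: the set of occupied positions. -/
def suppF (a : Abacus N) : Finset ℕ := Finset.image a.pos Finset.univ

lemma card_suppF (a : Abacus N) : a.suppF.card = N := by
  rw [suppF, Finset.card_image_of_injective _ a.pos_injective, Finset.card_univ,
    Fintype.card_fin]

/-- `a.iota t` is `ι_{t+1}(w)`, the `(t+1)`-st largest occupied position (`t : Fin N`, 0-based). -/
def iota (a : Abacus N) (t : Fin N) : ℕ :=
  (Finset.sort a.suppF (· ≤ ·)).getD (N - 1 - (t : ℕ)) 0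

lemma length_sort_suppF (a : Abacus N) : (Finset.sort a.suppF (· ≤ ·)).length = N := by
  rw [Finset.length_sort, a.card_suppF]

lemma iota_mem (a : Abacus N) (t : Fin N) : a.iota t ∈ a.suppF := by
  have hlt : N - 1 - (t : ℕ) < (Finset.sort a.suppF (· ≤ ·)).length := by
    rw [a.length_sort_suppF]
    have := t.isLt
    omega
  rw [iota, List.getD_eq_getElem _ _ hlt]
  exact (Finset.mem_sort (α := ℕ) (· ≤ ·)).mp (List.getElem_mem hlt)

lemma iota_injective (a : Abacus N) : Function.Injective a.iota := by
  intro t t' h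
  have hn : (Finset.sort a.suppF (· ≤ ·)).Nodup := Finset.sort_nodup _ _
  have h1 : N - 1 - (t : ℕ) < (Finset.sort a.suppF (· ≤ ·)).length := by
    rw [a.length_sort_suppF]; have := t.isLt; omega
  have h2 : N - 1 - (t' : ℕ) < (Finset.sort a.suppF (· ≤ ·)).length := by
    rw [a.length_sort_suppF]; have := t'.isLt; omega
  rw [iota, iota, List.getD_eq_getElem _ _ h1, List.getD_eq_getElem _ _ h2] at h
  have := (List.Nodup.getElem_inj_iff hn (hi := h1) (hj := h2)).mp h
  have ht := t.isLt
  have ht' := t'.isLt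
  exact Fin.ext (by omega)

lemma one_le_w_iota (a : Abacus N) (t : Fin N) : 1 ≤ a.w (a.iota t) := by
  obtain ⟨B, -, hB⟩ := Finset.mem_image.mp (a.iota_mem t)
  rw [← hB, a.pos_spec]
  omega

/-- The permutation `σ_w ∈ S_N` (on `Fin N`, 0-based): `σ_w(B) = w_{ι_{B+1}(w)}`. -/
def sigma (a : Abacus N) : Equiv.Perm (Fin N) :=
  Equiv.ofBijective
    (fun t => (⟨a.w (a.iota t) - 1, by
        have h1 := a.one_le_w_iota t
        have h2 := a.w_le (a.iota t)
        omega⟩ : Fin N))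
    (Finite.injective_iff_bijective.mp (by
      intro t t' h
      have h1 := a.one_le_w_iota t
      have h1' := a.one_le_w_iota t'
      have hv : a.w (a.iota t) = a.w (a.iota t') := by
        have := congrArg Fin.val h
        simp only at this
        omega
      have hu := a.uniq (a.w (a.iota t)) h1 (a.w_le _)
      obtain ⟨i, -, hi⟩ := hu
      have e1 := hi (a.iota t) rfl
      have e2 := hi (a.iota t') hv.symm
      exact a.iota_injective (e1.trans e2.symm)))

/-- The sign `sgn(w)` of a labelled abacus: the sign of `σ_w`. -/
def sgn (a : Abacus N) : ℤ := Equiv.Perm.sign a.sigma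

/-- The weight `wt(w) = ∏_{i ∈ supp(w)} x_{w_i}^i`: the variable `X B` is `x_{B+1}`. -/
def wt (a : Abacus N) : MvPolynomial (Fin N) ℤ :=
  ∏ B : Fin N, X B ^ a.pos B


end Abacus

namespace Abacus

variable {N : ℕ}

/-- `a.HasShape l` says that the shape `sh(w) = (ι_1(w) - (N-1), ι_2(w) - (N-2), …, ι_N(w))`
of the abacus equals the partition `l` (stated additively: `ι_{t+1}(w) = l_{t+1} + (N-1-t)`). -/
def HasShape (a : Abacus N) (l : Ptn) : Prop :=
  (∀ t : Fin N, l.part t + (N - 1 - (t : ℕ)) = a.iota t) ∧ ∀ i, N ≤ i → l.part i = 0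

end Abacus

/-- `IsRMove r a a' i`: the abacus `a'` is obtained from `a` by `r`-moving the bead
at position `i` (to position `i + r`). -/
def IsRMove {N : ℕ} (r : ℕ) (a a' : Abacus N) (i : ℕ) : Prop :=
  a.w i ≠ 0 ∧ a.w (i + r) = 0 ∧ a'.w i = 0 ∧ a'.w (i + r) = a.w i ∧
    ∀ j, j ≠ i → j ≠ i + r → a'.w j = a.w j

/-- `SeriesRMoves r m a a' idx`: the abacus `a'` is obtained from `a` by a series of `m`
`r`-moves of beads from positions `idx 0 < idx 1 < … < idx (m-1)`. -/
def SeriesRMoves {N : ℕ} (r m : ℕ) (a a' : Abacus N) (idx : Fin m → ℕ) : Prop :=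
  StrictMono idx ∧ ∃ v : Fin (m + 1) → Abacus N, v 0 = a ∧ v (Fin.last m) = a' ∧
    ∀ j : Fin m, IsRMove r (v j.castSucc) (v j.succ) (idx j)

/-- The set `K_N^{r,m}(μ,λ)`: sequences `(w⁽⁰⁾, …, w⁽ᵐ⁾)` of labelled abaci with `N` beads,
of shapes `μ` and `λ` at the two ends, where `w⁽ʲ⁾` is obtained from `w⁽ʲ⁻¹⁾` by `r`-moving
a bead from position `i_j`, with `i_1 < i_2 < … < i_m`. -/
def KSet (N r m : ℕ) (mu lam : Ptn) (v : Fin (m + 1) → Abacus N) : Prop :=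
  (v 0).HasShape mu ∧ (v (Fin.last m)).HasShape lam ∧
    ∃ idx : Fin m → ℕ, StrictMono idx ∧
      ∀ j : Fin m, IsRMove r (v j.castSucc) (v j.succ) (idx j)

/-- Bead `B+1` is left-`r`-mobile in `a`: its position is at least `r` and the position `r`
steps to the left is empty. -/
def IsLeftRMobile {N : ℕ} (a : Abacus N) (r : ℕ) (B : Fin N) : Prop :=
  r ≤ a.pos B ∧ a.w (a.pos B - r) = 0

/-- `IsLeftRMove a r B a'`: the abacus `a'` is obtained from `a` by `r`-moving bead `B+1`
leftwards. -/
def IsLeftRMove {N : ℕ} (a : Abacus N) (r : ℕ) (B : Fin N) (a' : Abacus N) : Prop :=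
  r ≤ a.pos B ∧ a'.w (a.pos B - r) = (B : ℕ) + 1 ∧ a'.w (a.pos B) = 0 ∧
    ∀ j, j ≠ a.pos B - r → j ≠ a.pos B → a'.w j = a.w j


namespace Abacus

variable {N : ℕ}

lemma mem_suppF {a : Abacus N} {x : ℕ} : x ∈ a.suppF ↔ a.w x ≠ 0 := by
  constructor
  · rintro hx
    obtain ⟨B, -, rfl⟩ := Finset.mem_image.mp hx
    rw [a.pos_spec]; omega
  · intro hx
    have h1 : 1 ≤ a.w x := Nat.one_le_iff_ne_zero.mpr hx
    have h2 := a.w_le x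
    refine Finset.mem_image.mpr ⟨⟨a.w x - 1, by omega⟩, Finset.mem_univ _, ?_⟩
    obtain ⟨i, hi, huniq⟩ := a.uniq (a.w x) h1 h2
    have e1 : a.pos ⟨a.w x - 1, by omega⟩ = i := by
      apply huniq; rw [a.pos_spec]; simp; omega
    have e2 : x = i := huniq x rfl
    rw [e1, e2]

lemma iota_strictAnti {a : Abacus N} {t t' : Fin N} (h : t < t') :
    a.iota t' < a.iota t := by
  have hs := Finset.sortedLT_sort a.suppF
  have h1 : N - 1 - (t : ℕ) < (Finset.sort a.suppF (· ≤ ·)).length := by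
    rw [a.length_sort_suppF]; have := t.isLt; omega
  have h2 : N - 1 - (t' : ℕ) < (Finset.sort a.suppF (· ≤ ·)).length := by
    rw [a.length_sort_suppF]; have := t'.isLt; omega
  rw [Abacus.iota, Abacus.iota, List.getD_eq_getElem _ _ h1, List.getD_eq_getElem _ _ h2]
  exact hs.getElem_lt_getElem_iff.mpr
    (by have := Fin.lt_def.mp h; have := t.isLt; have := t'.isLt; omega)

lemma suppF_eq_image_iota (a : Abacus N) : a.suppF = Finset.image a.iota Finset.univ := by
  refine (Finset.eq_of_subset_of_card_le ?_ ?_).symm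
  · intro x hx
    obtain ⟨t, -, rfl⟩ := Finset.mem_image.mp hx
    exact a.iota_mem t
  · rw [a.card_suppF, Finset.card_image_of_injective _ a.iota_injective, Finset.card_univ,
      Fintype.card_fin]

lemma exists_iota_eq {a : Abacus N} {x : ℕ} (hx : x ∈ a.suppF) : ∃ t, a.iota t = x := by
  rw [suppF_eq_image_iota] at hx
  obtain ⟨t, -, ht⟩ := Finset.mem_image.mp hx
  exact ⟨t, ht⟩

/-- rank lemma (forward): the number of elements of the support greater than `iota t` is `t`. -/
lemma card_filter_iota_lt (a : Abacus N) (t : Fin N) :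
    (a.suppF.filter (fun y => a.iota t < y)).card = (t : ℕ) := by
  have : a.suppF.filter (fun y => a.iota t < y)
      = Finset.image a.iota (Finset.univ.filter (fun t' => t' < t)) := by
    ext y
    simp only [Finset.mem_filter, Finset.mem_image, Finset.mem_univ, true_and]
    constructor
    · rintro ⟨hy, hlt⟩
      obtain ⟨t', rfl⟩ := exists_iota_eq hy
      refine ⟨t', ?_, rfl⟩
      by_contra hc
      push_neg at hc
      rcases eq_or_lt_of_le hc with h | h
      · rw [h] at hlt; omega
      · have := iota_strictAnti (a := a) h; omega
    · rintro ⟨t', ht', rfl⟩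
      exact ⟨a.iota_mem t', iota_strictAnti ht'⟩
  rw [this, Finset.card_image_of_injective _ a.iota_injective]
  have : Finset.univ.filter (fun t' : Fin N => t' < t) = Finset.Iio t := by
    ext t'; simp
  rw [this, Fin.card_Iio]

end Abacus

namespace Abacus

variable {N : ℕ}

/-- rank lemma (backward). -/
lemma iota_eq_of_card {a : Abacus N} {x : ℕ} {t : Fin N} (hx : x ∈ a.suppF)
    (hc : (a.suppF.filter (fun y => x < y)).card = (t : ℕ)) : a.iota t = x := by
  obtain ⟨t', rfl⟩ := exists_iota_eq hx
  rw [a.card_filter_iota_lt t'] at hc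
  congr 1
  exact Fin.ext hc.symm

/-- `x < iota t` iff `t` is less than the number of support elements above `x`. -/
lemma lt_iota_iff {a : Abacus N} {x : ℕ} {t : Fin N} :
    x < a.iota t ↔ (t : ℕ) < (a.suppF.filter (fun y => x < y)).card := by
  constructor
  · intro h
    have hsub : insert (a.iota t) (a.suppF.filter (fun y => a.iota t < y))
        ⊆ a.suppF.filter (fun y => x < y) := by
      intro y hy
      rcases Finset.mem_insert.mp hy with rfl | hy
      · exact Finset.mem_filter.mpr ⟨a.iota_mem t, h⟩
      · obtain ⟨h1, h2⟩ := Finset.mem_filter.mp hy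
        exact Finset.mem_filter.mpr ⟨h1, by omega⟩
    have := Finset.card_le_card hsub
    rw [Finset.card_insert_of_notMem (by simp), a.card_filter_iota_lt t] at this
    omega
  · intro h
    by_contra hc
    push_neg at hc
    have hsub : a.suppF.filter (fun y => x < y) ⊆ a.suppF.filter (fun y => a.iota t < y) := by
      intro y hy
      obtain ⟨h1, h2⟩ := Finset.mem_filter.mp hy
      exact Finset.mem_filter.mpr ⟨h1, by omega⟩
    have := Finset.card_le_card hsub
    rw [a.card_filter_iota_lt t] at this
    omega

lemma iota_sub_ge (a : Abacus N) : ∀ d : ℕ, ∀ i j : Fin N, (j : ℕ) - (i : ℕ) = d →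
    (i : ℕ) ≤ (j : ℕ) → a.iota j + ((j : ℕ) - (i : ℕ)) ≤ a.iota i := by
  intro d
  induction d with
  | zero => intro i j h hle; have : i = j := Fin.ext (by omega); subst this; omega
  | succ n ih =>
    intro i j h hle
    have hi1 : (i : ℕ) + 1 < N := by have := j.isLt; omega
    have h1 := ih ⟨(i : ℕ) + 1, hi1⟩ j (by simp; omega) (by simp; omega)
    have h2 : a.iota j + ((j:ℕ) - ((i:ℕ)+1)) ≤ a.iota ⟨(i:ℕ)+1, hi1⟩ := by simpa using h1
    have h3 : a.iota ⟨(i:ℕ)+1, hi1⟩ < a.iota i := iota_strictAnti (by simp [Fin.lt_def])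
    omega

lemma iota_ge (a : Abacus N) (t : Fin N) : N - 1 - (t : ℕ) ≤ a.iota t := by
  have hN : 0 < N := t.pos
  have := a.iota_sub_ge ((N - 1) - t) t ⟨N - 1, by omega⟩ (by simp) (by simp; omega)
  simp at this
  omega

/-- The shape of an abacus, as a partition. -/
def shape (a : Abacus N) : Ptn :=
  ⟨Finsupp.onFinset (Finset.range N)
    (fun i => if h : i < N then a.iota ⟨i, h⟩ - (N - 1 - i) else 0)
    (fun i hi => by
      simp only [Finset.mem_range]
      by_contra hc
      simp only [dif_neg hc] at hi; exact hi rfl),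
   by
    intro i j hij
    simp only [Finsupp.onFinset_apply]
    by_cases hj : j < N
    · have hi : i < N := lt_of_le_of_lt hij hj
      rw [dif_pos hi, dif_pos hj]
      have := a.iota_sub_ge (j - i) ⟨i, hi⟩ ⟨j, hj⟩ (by simp) (by simpa)
      simp only at this
      have g1 := a.iota_ge ⟨i, hi⟩
      have g2 := a.iota_ge ⟨j, hj⟩
      simp only at g1 g2
      omega
    · rw [dif_neg hj]
      exact Nat.zero_le _⟩

lemma shape_part (a : Abacus N) (t : Fin N) :
    (shape a).part t = a.iota t - (N - 1 - (t : ℕ)) := by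
  simp [shape, Ptn.part, t.isLt]

lemma shape_part_add (a : Abacus N) (t : Fin N) :
    (shape a).part t + (N - 1 - (t : ℕ)) = a.iota t := by
  rw [shape_part]
  have := a.iota_ge t
  omega

lemma shape_part_ge (a : Abacus N) {i : ℕ} (hi : N ≤ i) : (shape a).part i = 0 := by
  simp [shape, Ptn.part, Nat.not_lt.mpr hi]

lemma hasShape_shape (a : Abacus N) : a.HasShape (shape a) :=
  ⟨fun t => a.shape_part_add t, fun i hi => a.shape_part_ge hi⟩

lemma hasShape_unique {a : Abacus N} {l : Ptn} (h : a.HasShape l) : l = shape a := by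
  obtain ⟨h1, h2⟩ := h
  apply Subtype.ext
  apply Finsupp.ext
  intro i
  show l.part i = (shape a).part i
  by_cases hi : i < N
  · have e1 := h1 ⟨i, hi⟩
    have e2 := a.shape_part_add ⟨i, hi⟩
    simp only at e1 e2
    have : l.part ((⟨i, hi⟩ : Fin N) : ℕ) = l.part i := rfl
    omega
  · rw [h2 i (by omega), shape_part_ge a (by omega)]

end Abacus

namespace RMoveLemma

variable {N : ℕ} {r : ℕ} {a a' : Abacus N} {i : ℕ}

lemma mem_suppF_src (hm : IsRMove r a a' i) : i ∈ a.suppF :=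
  Abacus.mem_suppF.mpr hm.1

lemma not_mem_suppF_tgt (hm : IsRMove r a a' i) : i + r ∉ a.suppF := by
  rw [Abacus.mem_suppF]
  simp [hm.2.1]

lemma suppF_move (hr : 0 < r) (hm : IsRMove r a a' i) :
    a'.suppF = insert (i + r) (a.suppF.erase i) := by
  obtain ⟨h1, h2, h3, h4, h5⟩ := hm
  ext y
  rw [Abacus.mem_suppF, Finset.mem_insert, Finset.mem_erase, Abacus.mem_suppF]
  by_cases hy1 : y = i + r
  · subst hy1
    simp [h4, h1]
  · by_cases hy2 : y = i
    · subst hy2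
      simp [h3, hy1, hr.ne']
    · rw [h5 y hy2 hy1]
      tauto

lemma cardA (hr : 0 < r) (hm : IsRMove r a a' i) {x : ℕ} (hx : i + r ≤ x) :
    (a'.suppF.filter (fun y => x < y)).card = (a.suppF.filter (fun y => x < y)).card := by
  congr 1
  rw [suppF_move hr hm]
  ext y
  simp only [Finset.mem_filter, Finset.mem_insert, Finset.mem_erase]
  constructor
  · rintro ⟨rfl | ⟨hne, hy⟩, hxy⟩
    · omega
    · exact ⟨hy, hxy⟩
  · rintro ⟨hy, hxy⟩
    exact ⟨Or.inr ⟨by omega, hy⟩, hxy⟩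

lemma cardB (hr : 0 < r) (hm : IsRMove r a a' i) {x : ℕ} (hx1 : i ≤ x) (hx2 : x < i + r) :
    (a'.suppF.filter (fun y => x < y)).card = (a.suppF.filter (fun y => x < y)).card + 1 := by
  have he : a'.suppF.filter (fun y => x < y) = insert (i + r) (a.suppF.filter (fun y => x < y)) := by
    rw [suppF_move hr hm]
    ext y
    simp only [Finset.mem_filter, Finset.mem_insert, Finset.mem_erase]
    constructor
    · rintro ⟨rfl | ⟨hne, hy⟩, hxy⟩
      · exact Or.inl rfl
      · exact Or.inr ⟨hy, hxy⟩
    · rintro (rfl | ⟨hy, hxy⟩)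
      · exact ⟨Or.inl rfl, hx2⟩
      · exact ⟨Or.inr ⟨by omega, hy⟩, hxy⟩
  rw [he, Finset.card_insert_of_notMem]
  intro hc
  exact not_mem_suppF_tgt hm (Finset.mem_filter.mp hc).1

lemma cardC (hr : 0 < r) (hm : IsRMove r a a' i) {x : ℕ} (hx : x < i) :
    (a'.suppF.filter (fun y => x < y)).card = (a.suppF.filter (fun y => x < y)).card := by
  have he : a'.suppF.filter (fun y => x < y)
      = insert (i + r) ((a.suppF.filter (fun y => x < y)).erase i) := by
    rw [suppF_move hr hm]
    ext y
    simp only [Finset.mem_filter, Finset.mem_insert, Finset.mem_erase]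
    constructor
    · rintro ⟨rfl | ⟨hne, hy⟩, hxy⟩
      · exact Or.inl rfl
      · exact Or.inr ⟨hne, hy, hxy⟩
    · rintro (rfl | ⟨hne, hy, hxy⟩)
      · exact ⟨Or.inl rfl, by omega⟩
      · exact ⟨Or.inr ⟨hne, hy⟩, hxy⟩
  rw [he, Finset.card_insert_of_notMem, Finset.card_erase_of_mem, ]
  · have hmem : i ∈ a.suppF.filter (fun y => x < y) :=
      Finset.mem_filter.mpr ⟨mem_suppF_src hm, hx⟩
    have : 0 < (a.suppF.filter (fun y => x < y)).card := Finset.card_pos.mpr ⟨i, hmem⟩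
    omega
  · exact Finset.mem_filter.mpr ⟨mem_suppF_src hm, hx⟩
  · intro hc
    exact not_mem_suppF_tgt hm (Finset.mem_filter.mp ((Finset.mem_erase.mp hc).2)).1

/-- The (0-based) bottom row of the strip. -/
def kk (a : Abacus N) (i : ℕ) : ℕ := (a.suppF.filter (fun y => i < y)).card

/-- The (0-based) top row of the strip. -/
def kk' (a : Abacus N) (i r : ℕ) : ℕ := (a.suppF.filter (fun y => i + r < y)).card

lemma kk'_le_kk (hr : 0 < r) : kk' a i r ≤ kk a i := by
  apply Finset.card_le_card
  intro y hy
  obtain ⟨h1, h2⟩ := Finset.mem_filter.mp hy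
  exact Finset.mem_filter.mpr ⟨h1, by omega⟩

lemma kk_lt_N (hm : IsRMove r a a' i) : kk a i < N := by
  have h1 : a.suppF.filter (fun y => i < y) ⊆ a.suppF.erase i := by
    intro y hy
    obtain ⟨hy1, hy2⟩ := Finset.mem_filter.mp hy
    exact Finset.mem_erase.mpr ⟨by omega, hy1⟩
  have h2 := Finset.card_le_card h1
  rw [Finset.card_erase_of_mem (mem_suppF_src hm), a.card_suppF] at h2
  have : 0 < N := by
    have := Finset.card_pos.mpr ⟨i, mem_suppF_src hm⟩
    rw [a.card_suppF] at this
    exact this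
  unfold kk
  omega

lemma iota_k (hm : IsRMove r a a' i) : a.iota ⟨kk a i, kk_lt_N hm⟩ = i :=
  Abacus.iota_eq_of_card (mem_suppF_src hm) rfl

lemma iota_move_lt (hr : 0 < r) (hm : IsRMove r a a' i) {t : Fin N} (ht : (t : ℕ) < kk' a i r) :
    a'.iota t = a.iota t := by
  have hx : i + r < a.iota t := Abacus.lt_iota_iff.mpr ht
  apply Abacus.iota_eq_of_card
  · rw [suppF_move hr hm]
    exact Finset.mem_insert.mpr (Or.inr (Finset.mem_erase.mpr ⟨by omega, a.iota_mem t⟩))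
  · rw [cardA hr hm (by omega)]
    exact a.card_filter_iota_lt t

lemma iota_move_eq (hr : 0 < r) (hm : IsRMove r a a' i) {t : Fin N} (ht : (t : ℕ) = kk' a i r) :
    a'.iota t = i + r := by
  apply Abacus.iota_eq_of_card
  · rw [suppF_move hr hm]
    exact Finset.mem_insert_self _ _
  · rw [cardA hr hm le_rfl, ht]
    rfl

lemma iota_move_mid (hr : 0 < r) (hm : IsRMove r a a' i) {t : Fin N}
    (ht1 : kk' a i r < (t : ℕ)) (ht2 : (t : ℕ) ≤ kk a i) :
    ∀ h : (t : ℕ) - 1 < N, a'.iota t = a.iota ⟨(t : ℕ) - 1, h⟩ := by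
  intro h
  unfold kk' at ht1
  unfold kk at ht2
  set x := a.iota ⟨(t : ℕ) - 1, h⟩ with hx
  have hxi : i < x := by
    apply Abacus.lt_iota_iff.mpr
    simp only
    omega
  have hxir : ¬ (i + r < x) := by
    intro hc
    have := Abacus.lt_iota_iff.mp hc
    simp only at this
    omega
  have hxne : x ≠ i + r := by
    intro hc
    exact not_mem_suppF_tgt hm (hc ▸ a.iota_mem _)
  apply Abacus.iota_eq_of_card
  · rw [suppF_move hr hm]
    exact Finset.mem_insert.mpr (Or.inr (Finset.mem_erase.mpr ⟨by omega, a.iota_mem _⟩))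
  · rw [cardB hr hm (by omega) (by omega)]
    rw [a.card_filter_iota_lt]
    simp only
    omega

lemma iota_move_gt (hr : 0 < r) (hm : IsRMove r a a' i) {t : Fin N} (ht : kk a i < (t : ℕ)) :
    a'.iota t = a.iota t := by
  set x := a.iota t with hx
  have hxle : ¬ (i < x) := by
    intro hc
    have h2 : (t : ℕ) < kk a i := Abacus.lt_iota_iff.mp hc
    omega
  have hxne : x ≠ i := by
    intro hc
    have := iota_k hm
    rw [← this] at hc
    have := a.iota_injective hc
    have := congrArg Fin.val this
    simp only at this
    omega
  apply Abacus.iota_eq_of_card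
  · rw [suppF_move hr hm]
    refine Finset.mem_insert.mpr (Or.inr (Finset.mem_erase.mpr ⟨hxne, a.iota_mem _⟩))
  · rw [cardC hr hm (by omega)]
    exact a.card_filter_iota_lt t

end RMoveLemma

lemma Ptn.size_eq_sum {N : ℕ} (l : Ptn) (hl : ∀ i, N ≤ i → l.part i = 0) :
    l.size = ∑ t ∈ Finset.range N, l.part t := by
  have hsub : l.1.support ⊆ Finset.range N := by
    intro x hx
    rw [Finsupp.mem_support_iff] at hx
    rw [Finset.mem_range]
    by_contra hc
    exact hx (hl x (by omega))
  rw [Ptn.size, Finsupp.sum_of_support_subset _ hsub _ (fun i _ => rfl)]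
  rfl

namespace RMoveLemma

variable {N : ℕ} {r : ℕ} {a a' : Abacus N} {i : ℕ}

lemma part_lt (hr : 0 < r) (hm : IsRMove r a a' i) {t : ℕ} (ht : t < kk' a i r) :
    (Abacus.shape a').part t = (Abacus.shape a).part t := by
  have htN : t < N := lt_of_lt_of_le ht (le_of_lt (lt_of_le_of_lt (kk'_le_kk hr) (kk_lt_N hm)))
  have e1 := a.shape_part_add ⟨t, htN⟩
  have e2 := a'.shape_part_add ⟨t, htN⟩
  have e3 := iota_move_lt hr hm (t := ⟨t, htN⟩) ht
  simp only at e1 e2 e3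
  omega

lemma part_gt (hr : 0 < r) (hm : IsRMove r a a' i) {t : ℕ} (ht : kk a i < t) :
    (Abacus.shape a').part t = (Abacus.shape a).part t := by
  by_cases htN : t < N
  · have e1 := a.shape_part_add ⟨t, htN⟩
    have e2 := a'.shape_part_add ⟨t, htN⟩
    have e3 := iota_move_gt hr hm (t := ⟨t, htN⟩) ht
    simp only at e1 e2 e3
    omega
  · rw [a.shape_part_ge (by omega), a'.shape_part_ge (by omega)]

lemma part_mid (hr : 0 < r) (hm : IsRMove r a a' i) {t : ℕ}
    (ht1 : kk' a i r < t) (ht2 : t ≤ kk a i) :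
    (Abacus.shape a').part t = (Abacus.shape a).part (t - 1) + 1 := by
  have htN : t < N := lt_of_le_of_lt ht2 (kk_lt_N hm)
  have htN1 : t - 1 < N := by omega
  have e1 := a.shape_part_add ⟨t - 1, htN1⟩
  have e2 := a'.shape_part_add ⟨t, htN⟩
  have e3 := iota_move_mid hr hm (t := ⟨t, htN⟩) ht1 ht2 htN1
  simp only at e1 e2 e3
  omega

lemma part_top (hr : 0 < r) (hm : IsRMove r a a' i) :
    (Abacus.shape a).part (kk' a i r) < (Abacus.shape a').part (kk' a i r) := by
  have htN : kk' a i r < N := lt_of_le_of_lt (kk'_le_kk hr) (kk_lt_N hm)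
  have e1 := a.shape_part_add ⟨kk' a i r, htN⟩
  have e2 := a'.shape_part_add ⟨kk' a i r, htN⟩
  have e3 := iota_move_eq hr hm (t := ⟨kk' a i r, htN⟩) rfl
  have e4 : ¬ (i + r < a.iota ⟨kk' a i r, htN⟩) := by
    intro hc
    have h2 : (kk' a i r : ℕ) < kk' a i r := Abacus.lt_iota_iff.mp hc
    omega
  have e5 : a.iota ⟨kk' a i r, htN⟩ ≠ i + r := by
    intro hc
    exact not_mem_suppF_tgt hm (hc ▸ a.iota_mem _)
  simp only at e1 e2 e3
  omega

lemma part_strict_iff (hr : 0 < r) (hm : IsRMove r a a' i) {t : ℕ} :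
    (Abacus.shape a).part t < (Abacus.shape a').part t ↔ kk' a i r ≤ t ∧ t ≤ kk a i := by
  constructor
  · intro h
    constructor
    · by_contra hc
      rw [part_lt hr hm (by omega)] at h
      omega
    · by_contra hc
      rw [part_gt hr hm (by omega)] at h
      omega
  · rintro ⟨h1, h2⟩
    rcases eq_or_lt_of_le h1 with rfl | h1
    · exact part_top hr hm
    · rw [part_mid hr hm h1 h2]
      have := (Abacus.shape a).2 (Nat.sub_le t 1 |>.trans (le_refl t))
      have hmono : (Abacus.shape a).part t ≤ (Abacus.shape a).part (t - 1) :=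
        (Abacus.shape a).2 (by omega)
      omega

lemma sub_move (hr : 0 < r) (hm : IsRMove r a a' i) :
    Ptn.Sub (Abacus.shape a) (Abacus.shape a') := by
  intro t
  by_cases h1 : t < kk' a i r
  · rw [part_lt hr hm h1]
  · by_cases h2 : t ≤ kk a i
    · exact le_of_lt ((part_strict_iff hr hm).mpr ⟨by omega, h2⟩)
    · rw [part_gt hr hm (by omega)]

lemma sum_iota (b : Abacus N) : ∑ t : Fin N, b.iota t = ∑ x ∈ b.suppF, x := by
  rw [b.suppF_eq_image_iota, Finset.sum_image (fun x _ y _ h => b.iota_injective h)]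

lemma size_move (hr : 0 < r) (hm : IsRMove r a a' i) :
    (Abacus.shape a').size = (Abacus.shape a).size + r := by
  have key : ∀ b : Abacus N, (Abacus.shape b).size + ∑ t : Fin N, (N - 1 - (t : ℕ))
      = ∑ x ∈ b.suppF, x := by
    intro b
    rw [Ptn.size_eq_sum _ (fun j hj => b.shape_part_ge hj),
      ← sum_iota b, ← Fin.sum_univ_eq_sum_range, ← Finset.sum_add_distrib]
    exact Finset.sum_congr rfl fun t _ => b.shape_part_add t
  have h1 := key a
  have h2 := key a'
  have hsum : ∑ x ∈ a'.suppF, x = (∑ x ∈ a.suppF, x) + r := by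
    rw [suppF_move hr hm, Finset.sum_insert (by
      simp only [Finset.mem_erase]
      rintro ⟨-, hc⟩
      exact not_mem_suppF_tgt hm hc)]
    have := Finset.sum_erase_add a.suppF id (mem_suppF_src hm)
    simp only [id] at this
    omega
  omega

end RMoveLemma

lemma Adjacent.symm' {c d : ℕ × ℕ} (h : Adjacent c d) : Adjacent d c := by
  unfold Adjacent at *
  tauto

/-- Reversal of paths inside a set. -/
lemma revpath {S : Set (ℕ × ℕ)} {x y : ℕ × ℕ} (hx : x ∈ S)
    (h : Relation.ReflTransGen (fun u v => v ∈ S ∧ Adjacent u v) x y) :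
    y ∈ S ∧ Relation.ReflTransGen (fun u v => v ∈ S ∧ Adjacent u v) y x := by
  induction h with
  | refl => exact ⟨hx, Relation.ReflTransGen.refl⟩
  | tail hab hbc ih =>
    exact ⟨hbc.1, Relation.ReflTransGen.head ⟨ih.1, hbc.2.symm'⟩ ih.2⟩

namespace RMoveLemma

variable {N : ℕ} {r : ℕ} {a a' : Abacus N} {i : ℕ}

lemma mem_skew_iff (hr : 0 < r) (hm : IsRMove r a a' i) {c : ℕ × ℕ} :
    c ∈ Ptn.skew (Abacus.shape a) (Abacus.shape a') ↔
      kk' a i r ≤ c.1 ∧ c.1 ≤ kk a i ∧ (Abacus.shape a).part c.1 ≤ c.2 ∧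
        c.2 < (Abacus.shape a').part c.1 := by
  obtain ⟨t, j⟩ := c
  simp only [Ptn.skew, Ptn.cells, Set.mem_diff, Set.mem_setOf_eq, not_lt]
  constructor
  · rintro ⟨h1, h2⟩
    have hs : (Abacus.shape a).part t < (Abacus.shape a').part t := by omega
    obtain ⟨hk1, hk2⟩ := (part_strict_iff hr hm).mp hs
    exact ⟨hk1, hk2, h2, h1⟩
  · rintro ⟨-, -, h3, h4⟩
    exact ⟨h4, h3⟩

lemma row_nonempty (hr : 0 < r) (hm : IsRMove r a a' i) {t : ℕ}
    (h1 : kk' a i r ≤ t) (h2 : t ≤ kk a i) :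
    (Abacus.shape a).part t < (Abacus.shape a').part t :=
  (part_strict_iff hr hm).mpr ⟨h1, h2⟩

private def Rrel (m l : Ptn) : ℕ × ℕ → ℕ × ℕ → Prop :=
  fun u v => v ∈ Ptn.skew m l ∧ Adjacent u v

lemma rowpath (hr : 0 < r) (hm : IsRMove r a a' i) :
    ∀ d t j, j - (Abacus.shape a).part t = d →
      (t, j) ∈ Ptn.skew (Abacus.shape a) (Abacus.shape a') →
      Relation.ReflTransGen (Rrel (Abacus.shape a) (Abacus.shape a')) (t, j)
        (t, (Abacus.shape a).part t) := by
  intro d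
  induction d with
  | zero =>
    intro t j hd hc
    have := (mem_skew_iff hr hm).mp hc
    simp only at this
    have : j = (Abacus.shape a).part t := by omega
    rw [this]
  | succ n ih =>
    intro t j hd hc
    have hmem := (mem_skew_iff hr hm).mp hc
    simp only at hmem
    have hc' : (t, j - 1) ∈ Ptn.skew (Abacus.shape a) (Abacus.shape a') := by
      rw [mem_skew_iff hr hm]
      refine ⟨hmem.1, hmem.2.1, ?_, ?_⟩
      · show (Abacus.shape a).part t ≤ j - 1
        omega
      · show j - 1 < (Abacus.shape a').part t
        omega
    refine Relation.ReflTransGen.head ⟨hc', Or.inl ⟨rfl, Or.inr (by simp; omega)⟩⟩ ?_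
    exact ih t (j - 1) (by omega) hc'

lemma downpath (hr : 0 < r) (hm : IsRMove r a a' i) :
    ∀ d t, kk a i - t = d → kk' a i r ≤ t → t ≤ kk a i →
      Relation.ReflTransGen (Rrel (Abacus.shape a) (Abacus.shape a'))
        (t, (Abacus.shape a).part t) (kk a i, (Abacus.shape a).part (kk a i)) := by
  intro d
  induction d with
  | zero =>
    intro t hd h1 h2
    have : t = kk a i := by omega
    rw [this]
  | succ n ih =>
    intro t hd h1 h2
    have ht : t < kk a i := by omega
    set μ := Abacus.shape a
    set lam := Abacus.shape a'
    have hstep : (t + 1, μ.part t) ∈ Ptn.skew μ lam := by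
      rw [mem_skew_iff hr hm]
      refine ⟨by omega, by omega, μ.2 (by omega), ?_⟩
      rw [part_mid hr hm (by omega) (by omega)]
      exact Nat.lt_succ_self _
    refine Relation.ReflTransGen.head ⟨hstep, Or.inr ⟨rfl, Or.inl rfl⟩⟩ ?_
    refine Relation.ReflTransGen.trans (rowpath hr hm _ _ _ rfl hstep) ?_
    exact ih (t + 1) (by omega) (by omega) (by omega)

lemma connected_move (hr : 0 < r) (hm : IsRMove r a a' i) :
    ConnectedSet (Ptn.skew (Abacus.shape a) (Abacus.shape a')) := by
  intro c hc d hd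
  set μ := Abacus.shape a
  set lam := Abacus.shape a'
  have anchor := fun (x : ℕ × ℕ) (hx : x ∈ Ptn.skew μ lam) =>
    Relation.ReflTransGen.trans
      (rowpath hr hm _ x.1 x.2 rfl (by simpa using hx))
      (downpath hr hm _ x.1 rfl ((mem_skew_iff hr hm).mp (by simpa using hx)).1
        ((mem_skew_iff hr hm).mp (by simpa using hx)).2.1)
  have h1 := anchor c hc
  have h2 := anchor d hd
  exact Relation.ReflTransGen.trans h1 (revpath hd h2).2

lemma no2x2 (hr : 0 < r) (hm : IsRMove r a a' i) :
    ∀ c ∈ Ptn.skew (Abacus.shape a) (Abacus.shape a'),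
      (c.1 + 1, c.2 + 1) ∉ Ptn.skew (Abacus.shape a) (Abacus.shape a') := by
  rintro ⟨t, j⟩ hc hc'
  rw [mem_skew_iff hr hm] at hc hc'
  simp only at hc hc'
  obtain ⟨h1, h2, h3, h4⟩ := hc
  obtain ⟨g1, g2, g3, g4⟩ := hc'
  rw [part_mid hr hm (by omega) g2] at g4
  simp only [Nat.add_sub_cancel] at g4
  omega

lemma isBorderStrip_move (hr : 0 < r) (hm : IsRMove r a a' i) :
    IsBorderStrip r (Abacus.shape a) (Abacus.shape a') :=
  ⟨sub_move hr hm, size_move hr hm, connected_move hr hm, no2x2 hr hm⟩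

lemma shape_ne (hr : 0 < r) (hm : IsRMove r a a' i) :
    Abacus.shape a ≠ Abacus.shape a' := by
  intro hc
  have := size_move hr hm
  rw [hc] at this
  omega

lemma top_move (hr : 0 < r) (hm : IsRMove r a a' i) :
    Ptn.top (Abacus.shape a) (Abacus.shape a') = kk' a i r + 1 := by
  rw [Ptn.top, if_neg (shape_ne hr hm)]
  congr 1
  set T := {t | (Abacus.shape a).part t ≠ (Abacus.shape a').part t} with hT
  have hmem : kk' a i r ∈ T := by
    have := part_top hr hm
    simp only [hT, Set.mem_setOf_eq]
    omega
  apply le_antisymm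
  · exact Nat.sInf_le hmem
  · by_contra hcon
    push_neg at hcon
    have hmem2 := Nat.sInf_mem (Set.nonempty_of_mem hmem)
    rw [hT, Set.mem_setOf_eq] at hmem2
    exact hmem2 (part_lt hr hm hcon).symm

end RMoveLemma

namespace RMoveLemma

lemma kk'_mono {N r : ℕ} {a a' a'' : Abacus N} {i1 i2 : ℕ} (hr : 0 < r)
    (hm1 : IsRMove r a a' i1) (hm2 : IsRMove r a' a'' i2) (h12 : i1 < i2) :
    kk' a' i2 r ≤ kk' a i1 r := by
  apply Finset.card_le_card
  intro y hy
  obtain ⟨hy1, hy2⟩ := Finset.mem_filter.mp hy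
  rw [suppF_move hr hm1, Finset.mem_insert, Finset.mem_erase] at hy1
  refine Finset.mem_filter.mpr ⟨?_, by omega⟩
  rcases hy1 with rfl | ⟨-, hy1⟩
  · omega
  · exact hy1

end RMoveLemma

theorem KSet_nonempty_imp_decomposable' (N r m : ℕ) (hr : 0 < r) (hm : 0 < m) (hN : 0 < N)
    (mu lam : Ptn) (hmu : ∀ i, N ≤ i → mu.part i = 0) (hlam : ∀ i, N ≤ i → lam.part i = 0)
    (h : ∃ v : Fin (m + 1) → Abacus N, KSet N r m mu lam v) :
    Ptn.Sub mu lam ∧ RDecomposable r mu lam ∧ lam.size = mu.size + r * m := by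
  obtain ⟨v, hsh0, hshm, idx, hmono, hmove⟩ := h
  set V : ℕ → Abacus N := fun j => if hj : j ≤ m then v ⟨j, by omega⟩ else v 0 with hV
  have hV0 : V 0 = v 0 := by
    rw [hV]
    simp only [Nat.zero_le, dif_pos]
    congr 1
  have hVm : V m = v (Fin.last m) := by
    rw [hV]
    simp only [le_refl, dif_pos]
    congr 1
  have hmove' : ∀ j (hj : j < m), IsRMove r (V j) (V (j + 1)) (idx ⟨j, hj⟩) := by
    intro j hj
    have := hmove ⟨j, hj⟩
    have hj1 : j ≤ m := by omega
    have hj2 : j + 1 ≤ m := by omega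
    have e1 : v (Fin.castSucc ⟨j, hj⟩) = V j := by
      rw [hV]
      simp only [dif_pos hj1]
      exact congrArg v (Fin.ext rfl)
    have e2 : v (Fin.succ ⟨j, hj⟩) = V (j + 1) := by
      rw [hV]
      simp only [dif_pos hj2]
      exact congrArg v (Fin.ext rfl)
    rwa [e1, e2] at this
  set γ : ℕ → Ptn := fun j => Abacus.shape (V j) with hγ
  have hγ0 : γ 0 = mu := by
    rw [hγ]
    simp only
    rw [hV0, ← Abacus.hasShape_unique hsh0]
  have hγm : γ m = lam := by
    rw [hγ]
    simp only
    rw [hVm, ← Abacus.hasShape_unique hshm]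
  have hstrip : ∀ j < m, IsBorderStrip r (γ j) (γ (j + 1)) := fun j hj =>
    RMoveLemma.isBorderStrip_move hr (hmove' j hj)
  have htops : ∀ j, j + 1 < m → Ptn.top (γ (j + 1)) (γ (j + 2)) ≤ Ptn.top (γ j) (γ (j + 1)) := by
    intro j hj
    rw [RMoveLemma.top_move hr (hmove' j (by omega)),
      RMoveLemma.top_move hr (hmove' (j + 1) hj)]
    have hlt : idx ⟨j, by omega⟩ < idx ⟨j + 1, hj⟩ := hmono (by simp [Fin.lt_def])
    have := RMoveLemma.kk'_mono hr (hmove' j (by omega)) (hmove' (j + 1) hj) hlt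
    omega
  have hchain : RChain r mu lam m γ := ⟨hγ0, hγm, hstrip, htops⟩
  have hsub : ∀ j ≤ m, Ptn.Sub mu (γ j) := by
    intro j
    induction j with
    | zero => intro _; rw [hγ0]; exact fun t => le_refl _
    | succ n ih =>
      intro hn
      have h1 := ih (by omega)
      have h2 := RMoveLemma.sub_move hr (hmove' n (by omega))
      exact fun t => le_trans (h1 t) (h2 t)
  have hsize : ∀ j ≤ m, (γ j).size = mu.size + r * j := by
    intro j
    induction j with
    | zero => intro _; rw [hγ0]; ring
    | succ n ih =>
      intro hn
      have h1 := ih (by omega)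
      have h2 := RMoveLemma.size_move hr (hmove' n (by omega))
      rw [hγ] at h1 ⊢
      simp only at h1 ⊢
      rw [h2, h1]
      ring
  refine ⟨by rw [← hγm]; exact hsub m le_rfl, ⟨m, γ, hchain⟩, ?_⟩
  rw [← hγm]
  exact hsize m le_rfl

/-- **Lemma 3.2(i)**: if `K_N^{r,m}(μ,λ)` is non-empty then `μ ⊆ λ` and `λ/μ` is an
`r`-decomposable skew partition of size `rm`. -/
theorem KSet_nonempty_imp_decomposable (N r m : ℕ) (hr : 0 < r) (hm : 0 < m) (hN : 0 < N)
    (mu lam : Ptn) (hmu : ∀ i, N ≤ i → mu.part i = 0) (hlam : ∀ i, N ≤ i → lam.part i = 0)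
    (h : ∃ v : Fin (m + 1) → Abacus N, KSet N r m mu lam v) :
    Ptn.Sub mu lam ∧ RDecomposable r mu lam ∧ lam.size = mu.size + r * m := by
  exact KSet_nonempty_imp_decomposable' N r m hr hm hN mu lam hmu hlam h
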